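/- arXiv:2408.13690 — 2 statements merged into one kernel-verified Lean document; each statement's English description precedes it below -/
import Mathlib

section
/- Let n, p, l be natural numbers, σ > 0, and let φ^l ∈ ℝ^{l+1}, φ^p ∈ ℝ^{p+1}, μ ∈ ℝ^{l+1}, Σ ∈ ℝ^{(l+1)×(l+1)}, μ̂ ∈ ℝ^{p+1}, Σ̂ ∈ ℝ^{(p+1)×(p+1)} symmetric positive definite, Φ ∈ ℝ^{n×(l+1)}, Φ̂ ∈ ℝ^{n×(p+1)}. Set Σ_p := (Σ̂⁻¹ + σ⁻² Φ̂ᵀΦ̂)⁻¹. Let w (valued in ℝ^{l+1}) and ε (valued in ℝ^n) be square-integrable random vectors with E[w] = μ, E[w wᵀ] = μμᵀ + Σ, E[ε] = 0, E[ε εᵀ] = σ² I_n, and E[w εᵀ] = 0, and set y := Φw + ε and μ̂_p := Σ_p Σ̂⁻¹ μ̂ + σ⁻² Σ_p Φ̂ᵀ y. Then E[(⟨φ^l, w⟩ − ⟨φ^p, μ̂_p⟩)²] + (φ^p)ᵀ Σ_p (φ^p) = (φ^l)ᵀ(μμᵀ + Σ)(φ^l) − 2(φ^p)ᵀ Σ_p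 Σ̂⁻¹ μ̂ μᵀ φ^l − (2/σ²)(φ^p)ᵀ Σ_p Φ̂ᵀ Φ (μμᵀ + Σ) φ^l + (φ^p)ᵀ Σ_p Σ̂⁻¹ μ̂ μ̂ᵀ Σ̂⁻¹ Σ_p (φ^p) + (1/σ²)(φ^p)ᵀ Σ_p Σ̂⁻¹ μ̂ μᵀ Φᵀ Φ̂ Σ_p (φ^p) + (1/σ²)(φ^p)ᵀ Σ_p Φ̂ᵀ Φ μ μ̂ᵀ Σ̂⁻¹ Σ_p (φ^p) + (1/σ⁴)(φ^p)ᵀ Σ_p Φ̂ᵀ Φ (μμᵀ + Σ) Φᵀ Φ̂ Σ_p (φ^p) + (1/σ²)(φ^p)ᵀ Σ_p Φ̂ᵀ Φ̂ Σ_p (φ^p) + (φ^p)ᵀ Σ_p (φ^p). -/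
open Matrix MeasureTheory

lemma l2_mul_integrable {Ω : Type*} [MeasurableSpace Ω] {m : Measure Ω}
    {f g : Ω → ℝ} (hf : MemLp f 2 m) (hg : MemLp g 2 m) :
    Integrable (fun ω => f ω * g ω) m := by
  have h := (((hf.add hg).integrable_sq.sub hf.integrable_sq).sub hg.integrable_sq).const_mul
    ((2 : ℝ)⁻¹)
  refine h.congr (Filter.Eventually.of_forall fun ω => ?_)
  simp only [Pi.sub_apply, Pi.add_apply]; ring

lemma vecMulVec_mulVec' {n m : Type*} [Fintype m] (a : n → ℝ) (b x : m → ℝ) :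
    vecMulVec a b *ᵥ x = (b ⬝ᵥ x) • a := by
  ext i
  simp only [vecMulVec_apply, mulVec, dotProduct, Pi.smul_apply, smul_eq_mul, Finset.sum_mul]
  exact Finset.sum_congr rfl fun j _ => by ring

lemma dotProduct_mulVec_eq {n m : Type*} [Fintype n] [Fintype m]
    (A : Matrix n m ℝ) (x : n → ℝ) (y : m → ℝ) :
    x ⬝ᵥ (A *ᵥ y) = (Aᵀ *ᵥ x) ⬝ᵥ y := by
  rw [Matrix.dotProduct_mulVec, Matrix.mulVec_transpose]


/-- Eq. (12) of the paper: closed-form MSE of Bayesian polynomial regression with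
ground truth `f(x) = ⟨φˡ, w⟩`, `w` having mean `μ` and second moment `μμᵀ + Σ`,
observations `y = Φw + ε` with noise covariance `σ²I`, prior `θ ~ N(μ̂, Σ̂)`,
posterior covariance `Σ_p = (Σ̂⁻¹ + σ⁻²Φ̂ᵀΦ̂)⁻¹` and posterior mean
`μ̂_p = Σ_p Σ̂⁻¹ μ̂ + σ⁻² Σ_p Φ̂ᵀ y`. The left-hand side is Bias + Variance. -/
theorem bpr_mse_closed_form {n p l : ℕ} (σ : ℝ) (hσ : 0 < σ)
    {Ω : Type*} [MeasurableSpace Ω] (m : Measure Ω) [IsProbabilityMeasure m]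
    (φl μv : Fin (l + 1) → ℝ) (φp μh : Fin (p + 1) → ℝ)
    (S : Matrix (Fin (l + 1)) (Fin (l + 1)) ℝ)
    (Sh : Matrix (Fin (p + 1)) (Fin (p + 1)) ℝ)
    (hShsymm : Sh.IsSymm) (hShpd : Sh.PosDef)
    (Φ : Matrix (Fin n) (Fin (l + 1)) ℝ) (Φh : Matrix (Fin n) (Fin (p + 1)) ℝ)
    (Sp : Matrix (Fin (p + 1)) (Fin (p + 1)) ℝ)
    (hSp : Sp = (Sh⁻¹ + σ⁻¹ ^ 2 • (Φhᵀ * Φh))⁻¹)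
    (w : Ω → Fin (l + 1) → ℝ) (e : Ω → Fin n → ℝ)
    (hwL2 : ∀ i, MemLp (fun ω => w ω i) 2 m)
    (heL2 : ∀ i, MemLp (fun ω => e ω i) 2 m)
    (hw1 : ∀ i, ∫ ω, w ω i ∂m = μv i)
    (hw2 : ∀ i j, ∫ ω, w ω i * w ω j ∂m = μv i * μv j + S i j)
    (he1 : ∀ i, ∫ ω, e ω i ∂m = 0)
    (he2 : ∀ i j, ∫ ω, e ω i * e ω j ∂m = σ ^ 2 * (1 : Matrix (Fin n) (Fin n) ℝ) i j)
    (hwe : ∀ i j, ∫ ω, w ω i * e ω j ∂m = 0)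
    (y : Ω → Fin n → ℝ) (hy : ∀ ω, y ω = Φ *ᵥ w ω + e ω)
    (μp : Ω → Fin (p + 1) → ℝ)
    (hμp : ∀ ω, μp ω = Sp *ᵥ (Sh⁻¹ *ᵥ μh) + σ⁻¹ ^ 2 • (Sp *ᵥ (Φhᵀ *ᵥ y ω))) :
    (∫ ω, (φl ⬝ᵥ w ω - φp ⬝ᵥ μp ω) ^ 2 ∂m) + φp ⬝ᵥ (Sp *ᵥ φp) =
      φl ⬝ᵥ ((vecMulVec μv μv + S) *ᵥ φl)
        - 2 * (φp ⬝ᵥ ((Sp * Sh⁻¹ * vecMulVec μh μv) *ᵥ φl))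
        - (2 / σ ^ 2) * (φp ⬝ᵥ ((Sp * Φhᵀ * Φ * (vecMulVec μv μv + S)) *ᵥ φl))
        + φp ⬝ᵥ ((Sp * Sh⁻¹ * vecMulVec μh μh * Sh⁻¹ * Sp) *ᵥ φp)
        + (1 / σ ^ 2) * (φp ⬝ᵥ ((Sp * Sh⁻¹ * vecMulVec μh μv * Φᵀ * Φh * Sp) *ᵥ φp))
        + (1 / σ ^ 2) * (φp ⬝ᵥ ((Sp * Φhᵀ * Φ * vecMulVec μv μh * Sh⁻¹ * Sp) *ᵥ φp))
        + (1 / σ ^ 4) *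
            (φp ⬝ᵥ ((Sp * Φhᵀ * Φ * (vecMulVec μv μv + S) * Φᵀ * Φh * Sp) *ᵥ φp))
        + (1 / σ ^ 2) * (φp ⬝ᵥ ((Sp * Φhᵀ * Φh * Sp) *ᵥ φp))
        + φp ⬝ᵥ (Sp *ᵥ φp) := by
  have hσ0 : σ ≠ 0 := ne_of_gt hσ
  -- symmetry facts
  have hShT : Shᵀ = Sh := hShsymm
  have hShiT : (Sh⁻¹)ᵀ = Sh⁻¹ := by rw [Matrix.transpose_nonsing_inv, hShT]
  have hSpT : Spᵀ = Sp := by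
    rw [hSp, Matrix.transpose_nonsing_inv]
    congr 1
    rw [Matrix.transpose_add, Matrix.transpose_smul, Matrix.transpose_mul,
      Matrix.transpose_transpose, hShiT]
  have hM2T : (vecMulVec μv μv + S)ᵀ = vecMulVec μv μv + S := by
    have hS : Sᵀ = S := by
      ext i j
      have h1 := hw2 i j
      have h2 := hw2 j i
      have h3 : ∫ ω, w ω j * w ω i ∂m = ∫ ω, w ω i * w ω j ∂m := by
        simp_rw [mul_comm]
      simp only [Matrix.transpose_apply]
      have := h2.symm.trans (h3.trans h1)
      linarith
    rw [Matrix.transpose_add, hS]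
    congr 1
    ext i j; simp [vecMulVec_apply, mul_comm]
  set M2 : Matrix (Fin (l+1)) (Fin (l+1)) ℝ := vecMulVec μv μv + S with hM2
  set u : Fin (l+1) → ℝ := Φᵀ *ᵥ (Φh *ᵥ (Sp *ᵥ φp)) with hu
  set v : Fin n → ℝ := Φh *ᵥ (Sp *ᵥ φp) with hv
  set c : ℝ := φp ⬝ᵥ (Sp *ᵥ (Sh⁻¹ *ᵥ μh)) with hc
  set a : Fin (l+1) → ℝ := φl - σ⁻¹ ^ 2 • u with ha
  set b : Fin n → ℝ := (-(σ⁻¹ ^ 2)) • v with hb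
  -- pointwise identity
  have hpt : ∀ ω, φl ⬝ᵥ w ω - φp ⬝ᵥ μp ω = a ⬝ᵥ w ω + b ⬝ᵥ e ω + (-c) := by
    intro ω
    have h1 : φp ⬝ᵥ (Sp *ᵥ (Φhᵀ *ᵥ y ω)) = u ⬝ᵥ w ω + v ⬝ᵥ e ω := by
      rw [hy, dotProduct_mulVec_eq Sp φp, hSpT, dotProduct_mulVec_eq Φhᵀ,
        Matrix.transpose_transpose, dotProduct_add, dotProduct_mulVec_eq Φ]
    rw [hμp, dotProduct_add, dotProduct_smul, h1, ha, hb, hc,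
      sub_dotProduct, smul_dotProduct, smul_dotProduct]
    simp only [smul_eq_mul]
    ring
  -- integrability facts
  have hwInt : ∀ i, Integrable (fun ω => w ω i) m := fun i => (hwL2 i).integrable one_le_two
  have heInt : ∀ i, Integrable (fun ω => e ω i) m := fun i => (heL2 i).integrable one_le_two
  have hX2 : MemLp (fun ω => a ⬝ᵥ w ω) 2 m := by
    have := memLp_finset_sum (μ := m) Finset.univ
      (f := fun i ω => a i * w ω i) (fun i _ => (hwL2 i).const_mul (a i))
    simpa [dotProduct] using this
  have hY2 : MemLp (fun ω => b ⬝ᵥ e ω) 2 m := by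
    have := memLp_finset_sum (μ := m) Finset.univ
      (f := fun i ω => b i * e ω i) (fun i _ => (heL2 i).const_mul (b i))
    simpa [dotProduct] using this
  -- first moments
  have hIX : ∫ ω, a ⬝ᵥ w ω ∂m = a ⬝ᵥ μv := by
    simp_rw [dotProduct]
    rw [integral_finset_sum _ (fun i _ => (hwInt i).const_mul (a i))]
    simp [integral_const_mul, hw1]
  have hIY : ∫ ω, b ⬝ᵥ e ω ∂m = 0 := by
    simp_rw [dotProduct]
    rw [integral_finset_sum _ (fun i _ => (heInt i).const_mul (b i))]
    simp [integral_const_mul, he1]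
  -- second moments
  have hIXX : ∫ ω, (a ⬝ᵥ w ω) * (a ⬝ᵥ w ω) ∂m
      = ∑ i, ∑ j, a i * a j * (μv i * μv j + S i j) := by
    have hexp : ∀ ω, (a ⬝ᵥ w ω) * (a ⬝ᵥ w ω)
        = ∑ i, ∑ j, (a i * a j) * (w ω i * w ω j) := by
      intro ω
      simp only [dotProduct, Finset.sum_mul_sum]
      exact Finset.sum_congr rfl fun i _ => Finset.sum_congr rfl fun j _ => by ring
    simp_rw [hexp]
    rw [integral_finset_sum _ (fun i _ => integrable_finset_sum _
      (fun j _ => (l2_mul_integrable (hwL2 i) (hwL2 j)).const_mul _))]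
    refine Finset.sum_congr rfl fun i _ => ?_
    rw [integral_finset_sum _ (fun j _ => (l2_mul_integrable (hwL2 i) (hwL2 j)).const_mul _)]
    exact Finset.sum_congr rfl fun j _ => by rw [integral_const_mul, hw2]
  have hIXY : ∫ ω, (a ⬝ᵥ w ω) * (b ⬝ᵥ e ω) ∂m = 0 := by
    have hexp : ∀ ω, (a ⬝ᵥ w ω) * (b ⬝ᵥ e ω)
        = ∑ i, ∑ j, (a i * b j) * (w ω i * e ω j) := by
      intro ω
      simp only [dotProduct, Finset.sum_mul_sum]
      exact Finset.sum_congr rfl fun i _ => Finset.sum_congr rfl fun j _ => by ring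
    simp_rw [hexp]
    rw [integral_finset_sum _ (fun i _ => integrable_finset_sum _
      (fun j _ => (l2_mul_integrable (hwL2 i) (heL2 j)).const_mul _))]
    refine Finset.sum_eq_zero fun i _ => ?_
    rw [integral_finset_sum _ (fun j _ => (l2_mul_integrable (hwL2 i) (heL2 j)).const_mul _)]
    exact Finset.sum_eq_zero fun j _ => by rw [integral_const_mul, hwe, mul_zero]
  have hIYY : ∫ ω, (b ⬝ᵥ e ω) * (b ⬝ᵥ e ω) ∂m = σ ^ 2 * (b ⬝ᵥ b) := by
    have hexp : ∀ ω, (b ⬝ᵥ e ω) * (b ⬝ᵥ e ω)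
        = ∑ i, ∑ j, (b i * b j) * (e ω i * e ω j) := by
      intro ω
      simp only [dotProduct, Finset.sum_mul_sum]
      exact Finset.sum_congr rfl fun i _ => Finset.sum_congr rfl fun j _ => by ring
    simp_rw [hexp]
    rw [integral_finset_sum _ (fun i _ => integrable_finset_sum _
      (fun j _ => (l2_mul_integrable (heL2 i) (heL2 j)).const_mul _))]
    have : ∀ i ∈ Finset.univ, (∫ ω, ∑ j, (b i * b j) * (e ω i * e ω j) ∂m)
        = σ ^ 2 * (b i * b i) := by
      intro i _
      rw [integral_finset_sum _ (fun j _ => (l2_mul_integrable (heL2 i) (heL2 j)).const_mul _)]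
      have : ∀ j ∈ Finset.univ, (∫ ω, (b i * b j) * (e ω i * e ω j) ∂m)
          = if j = i then σ ^ 2 * (b i * b i) else 0 := by
        intro j _
        rw [integral_const_mul, he2, Matrix.one_apply]
        by_cases h : i = j
        · subst h; simp; ring
        · simp [h, Ne.symm h]
      rw [Finset.sum_congr rfl this]
      simp
    rw [Finset.sum_congr rfl this, dotProduct, Finset.mul_sum]
  -- the main integral
  have hI : ∫ ω, (φl ⬝ᵥ w ω - φp ⬝ᵥ μp ω) ^ 2 ∂m
      = (∑ i, ∑ j, a i * a j * (μv i * μv j + S i j)) + σ ^ 2 * (b ⬝ᵥ b)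
        - 2 * c * (a ⬝ᵥ μv) + c ^ 2 := by
    have hexp : ∀ ω, (φl ⬝ᵥ w ω - φp ⬝ᵥ μp ω) ^ 2
        = (a ⬝ᵥ w ω) * (a ⬝ᵥ w ω) + ((b ⬝ᵥ e ω) * (b ⬝ᵥ e ω)
          + (2 * ((a ⬝ᵥ w ω) * (b ⬝ᵥ e ω)) + ((-2 * c) * (a ⬝ᵥ w ω)
          + ((-2 * c) * (b ⬝ᵥ e ω) + c ^ 2)))) := by
      intro ω; rw [hpt ω]; ring
    simp_rw [hexp]
    have iXX : Integrable (fun ω => (a ⬝ᵥ w ω) * (a ⬝ᵥ w ω)) m := l2_mul_integrable hX2 hX2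
    have iYY : Integrable (fun ω => (b ⬝ᵥ e ω) * (b ⬝ᵥ e ω)) m := l2_mul_integrable hY2 hY2
    have iXY : Integrable (fun ω => 2 * ((a ⬝ᵥ w ω) * (b ⬝ᵥ e ω))) m :=
      (l2_mul_integrable hX2 hY2).const_mul 2
    have iX : Integrable (fun ω => -2 * c * (a ⬝ᵥ w ω)) m :=
      (hX2.integrable one_le_two).const_mul _
    have iY : Integrable (fun ω => -2 * c * (b ⬝ᵥ e ω)) m :=
      (hY2.integrable one_le_two).const_mul _
    have iC : Integrable (fun _ : Ω => c ^ 2) m := integrable_const _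
    have i5 : Integrable (fun ω => -2 * c * (b ⬝ᵥ e ω) + c ^ 2) m := iY.add iC
    have i4 : Integrable (fun ω => -2 * c * (a ⬝ᵥ w ω) + (-2 * c * (b ⬝ᵥ e ω) + c ^ 2)) m :=
      iX.add i5
    have i3 : Integrable (fun ω => 2 * ((a ⬝ᵥ w ω) * (b ⬝ᵥ e ω))
        + (-2 * c * (a ⬝ᵥ w ω) + (-2 * c * (b ⬝ᵥ e ω) + c ^ 2))) m := iXY.add i4
    have i2 : Integrable (fun ω => (b ⬝ᵥ e ω) * (b ⬝ᵥ e ω) + (2 * ((a ⬝ᵥ w ω) * (b ⬝ᵥ e ω))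
        + (-2 * c * (a ⬝ᵥ w ω) + (-2 * c * (b ⬝ᵥ e ω) + c ^ 2)))) m := iYY.add i3
    rw [integral_add iXX i2, integral_add iYY i3, integral_add iXY i4, integral_add iX i5,
      integral_add iY iC, integral_const_mul, integral_const_mul, integral_const_mul,
      hIXX, hIYY, hIXY, hIX, hIY, integral_const]
    simp [measure_univ]
    ring
  -- quadratic form conversions
  have hquad : (∑ i, ∑ j, a i * a j * (μv i * μv j + S i j)) = a ⬝ᵥ (M2 *ᵥ a) := by
    simp only [dotProduct, mulVec, hM2, Matrix.add_apply, vecMulVec_apply, Finset.mul_sum]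
    exact Finset.sum_congr rfl fun i _ => Finset.sum_congr rfl fun j _ => by ring
  have hsymmdot : φl ⬝ᵥ (M2 *ᵥ u) = u ⬝ᵥ (M2 *ᵥ φl) := by
    rw [dotProduct_mulVec_eq, hM2T, dotProduct_comm]
  have haM2 : a ⬝ᵥ (M2 *ᵥ a) = φl ⬝ᵥ (M2 *ᵥ φl) - 2 * σ⁻¹ ^ 2 * (u ⬝ᵥ (M2 *ᵥ φl))
      + σ⁻¹ ^ 2 * σ⁻¹ ^ 2 * (u ⬝ᵥ (M2 *ᵥ u)) := by
    rw [ha, sub_dotProduct, smul_dotProduct, Matrix.mulVec_sub,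
      Matrix.mulVec_smul, dotProduct_sub, dotProduct_sub,
      dotProduct_smul, dotProduct_smul, hsymmdot]
    simp only [smul_eq_mul]
    ring
  have haμv : a ⬝ᵥ μv = φl ⬝ᵥ μv - σ⁻¹ ^ 2 * (u ⬝ᵥ μv) := by
    rw [ha, sub_dotProduct, smul_dotProduct]; simp [smul_eq_mul]
  have hbb : b ⬝ᵥ b = σ⁻¹ ^ 2 * σ⁻¹ ^ 2 * (v ⬝ᵥ v) := by
    rw [hb, smul_dotProduct, dotProduct_smul]
    simp only [smul_eq_mul]; ring
  -- RHS term collapses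
  have hkey : μh ⬝ᵥ (Sh⁻¹ *ᵥ (Sp *ᵥ φp)) = c := by
    rw [dotProduct_mulVec_eq, hShiT, dotProduct_mulVec_eq, hSpT, dotProduct_comm]
  have hT2 : φp ⬝ᵥ ((Sp * Sh⁻¹ * vecMulVec μh μv) *ᵥ φl) = (φl ⬝ᵥ μv) * c := by
    rw [← Matrix.mulVec_mulVec, vecMulVec_mulVec', ← Matrix.mulVec_mulVec,
      Matrix.mulVec_smul, Matrix.mulVec_smul, dotProduct_smul,
      dotProduct_comm μv φl]
    simp [smul_eq_mul, hc, mul_comm]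
  have hT3 : φp ⬝ᵥ ((Sp * Φhᵀ * Φ * M2) *ᵥ φl) = u ⬝ᵥ (M2 *ᵥ φl) := by
    rw [← Matrix.mulVec_mulVec, ← Matrix.mulVec_mulVec, ← Matrix.mulVec_mulVec,
      dotProduct_mulVec_eq Sp φp, hSpT, dotProduct_mulVec_eq Φhᵀ,
      Matrix.transpose_transpose, dotProduct_mulVec_eq Φ]
  have hT4 : φp ⬝ᵥ ((Sp * Sh⁻¹ * vecMulVec μh μh * Sh⁻¹ * Sp) *ᵥ φp) = c * c := by
    rw [← Matrix.mulVec_mulVec, ← Matrix.mulVec_mulVec, ← Matrix.mulVec_mulVec,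
      ← Matrix.mulVec_mulVec, vecMulVec_mulVec', Matrix.mulVec_smul, Matrix.mulVec_smul,
      dotProduct_smul, hkey]
    simp [smul_eq_mul, hc]
  have hT5 : φp ⬝ᵥ ((Sp * Sh⁻¹ * vecMulVec μh μv * Φᵀ * Φh * Sp) *ᵥ φp)
      = (u ⬝ᵥ μv) * c := by
    rw [← Matrix.mulVec_mulVec, ← Matrix.mulVec_mulVec, ← Matrix.mulVec_mulVec, ← hv, ← hu,
      ← Matrix.mulVec_mulVec, vecMulVec_mulVec', Matrix.mulVec_smul, dotProduct_smul,
      ← Matrix.mulVec_mulVec, ← hc, dotProduct_comm μv u]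
    simp only [smul_eq_mul]
  have hT6 : φp ⬝ᵥ ((Sp * Φhᵀ * Φ * vecMulVec μv μh * Sh⁻¹ * Sp) *ᵥ φp)
      = c * (u ⬝ᵥ μv) := by
    rw [← Matrix.mulVec_mulVec, ← Matrix.mulVec_mulVec, ← Matrix.mulVec_mulVec,
      vecMulVec_mulVec', hkey, Matrix.mulVec_smul, dotProduct_smul,
      ← Matrix.mulVec_mulVec, ← Matrix.mulVec_mulVec, dotProduct_mulVec_eq Sp φp, hSpT,
      dotProduct_mulVec_eq Φhᵀ, Matrix.transpose_transpose, dotProduct_mulVec_eq Φ, ← hv, ← hu]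
    simp only [smul_eq_mul]
  have hT7 : φp ⬝ᵥ ((Sp * Φhᵀ * Φ * M2 * Φᵀ * Φh * Sp) *ᵥ φp) = u ⬝ᵥ (M2 *ᵥ u) := by
    rw [← Matrix.mulVec_mulVec, ← Matrix.mulVec_mulVec, ← Matrix.mulVec_mulVec,
      ← Matrix.mulVec_mulVec, ← Matrix.mulVec_mulVec, ← Matrix.mulVec_mulVec,
      dotProduct_mulVec_eq Sp φp, hSpT, dotProduct_mulVec_eq Φhᵀ,
      Matrix.transpose_transpose, dotProduct_mulVec_eq Φ]
  have hT8 : φp ⬝ᵥ ((Sp * Φhᵀ * Φh * Sp) *ᵥ φp) = v ⬝ᵥ v := by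
    rw [← Matrix.mulVec_mulVec, ← Matrix.mulVec_mulVec, ← Matrix.mulVec_mulVec,
      dotProduct_mulVec_eq Sp φp, hSpT, dotProduct_mulVec_eq Φhᵀ,
      Matrix.transpose_transpose]
  rw [hI, hquad, haM2, haμv, hbb, hT2, hT3, hT4, hT5, hT6, hT7, hT8]
  field_simp
  ring
end

section
/- Let n, p be natural numbers, σ > 0, φ ∈ ℝ^{p+1}, μ ∈ ℝ^{p+1}, Σ ∈ ℝ^{(p+1)×(p+1)} symmetric positive definite, and Φ ∈ ℝ^{n×(p+1)}. Set Σ_p := (Σ⁻¹ + σ⁻² ΦᵀΦ)⁻¹. Let w (valued in ℝ^{p+1}) and ε (valued in ℝ^n) be square-integrable random vectors with E[w] = μ, E[w wᵀ] = μμᵀ + Σ, E[ε] = 0, E[ε εᵀ] = σ² I_n, and E[w εᵀ] = 0, and set μ̂_p := Σ_p Σ⁻¹ μ + σ⁻² Σ_p Φᵀ (Φw + ε). Then E[(⟨φ, w⟩ − ⟨φ, μ̂_p⟩)²] + φᵀ Σ_p φ = 2 φᵀ Σ_p φ; equivalently, writing σ_p²(x) = σ² + φᵀΣ_pφ for the posterior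 predictive variance, the mean squared error equals 2(σ_p²(x) − σ²). -/
open Matrix MeasureTheory

private lemma mul_memL1 {Ω : Type*} [MeasurableSpace Ω] {m : Measure Ω}
    {f g : Ω → ℝ} (hf : MemLp f 2 m) (hg : MemLp g 2 m) :
    Integrable (fun x => f x * g x) m := by
  have h : MemLp (fun x => f x * g x) 1 m := by
    have := hg.smul (r := 1) hf
    exact this
  exact memLp_one_iff_integrable.mp h

private lemma dot_trans {k l : Type*} [Fintype k] [Fintype l]
    (A : Matrix k l ℝ) (u : k → ℝ) (v : l → ℝ) :
    (Aᵀ *ᵥ u) ⬝ᵥ v = u ⬝ᵥ (A *ᵥ v) := by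
  rw [mulVec_transpose, ← dotProduct_mulVec]

private lemma integral_affine_sq {ι : Type*} [Fintype ι] {Ω : Type*} [MeasurableSpace Ω]
    (m : Measure Ω) [IsProbabilityMeasure m]
    (u : ι → Ω → ℝ) (hu : ∀ i, MemLp (u i) 2 m) (c : ι → ℝ) (k : ℝ) :
    ∫ ω, ((∑ i, c i * u i ω) + k) ^ 2 ∂m
      = (∑ i, ∑ j, c i * c j * ∫ ω, u i ω * u j ω ∂m)
        + 2 * k * (∑ i, c i * ∫ ω, u i ω ∂m) + k ^ 2 := by
  have hmul : ∀ i j : ι, Integrable (fun ω => u i ω * u j ω) m :=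
    fun i j => mul_memL1 (hu i) (hu j)
  have hint : ∀ i : ι, Integrable (u i) m := fun i => (hu i).integrable one_le_two
  have hpt : ∀ ω, ((∑ i, c i * u i ω) + k) ^ 2
      = (∑ i, ∑ j, c i * c j * (u i ω * u j ω)) + ((∑ i, (2 * k * c i) * u i ω) + k ^ 2) := by
    intro ω
    rw [add_sq, sq, Finset.sum_mul_sum]
    have e1 : ∑ i : ι, ∑ j : ι, c i * u i ω * (c j * u j ω)
        = ∑ i : ι, ∑ j : ι, c i * c j * (u i ω * u j ω) :=
      Finset.sum_congr rfl fun i _ => Finset.sum_congr rfl fun j _ => by ring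
    have e2 : 2 * (∑ i, c i * u i ω) * k = ∑ i, (2 * k * c i) * u i ω := by
      rw [Finset.mul_sum, Finset.sum_mul]
      exact Finset.sum_congr rfl fun i _ => by ring
    rw [e1, e2, add_assoc]
  have hI1 : Integrable (fun ω => ∑ i, ∑ j, c i * c j * (u i ω * u j ω)) m := by
    apply integrable_finset_sum; intro i _
    apply integrable_finset_sum; intro j _
    exact (hmul i j).const_mul _
  have hI2 : Integrable (fun ω => (∑ i, (2 * k * c i) * u i ω) + k ^ 2) m := by
    apply Integrable.add _ (integrable_const _)
    apply integrable_finset_sum; intro i _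
    exact (hint i).const_mul _
  have hI3 : Integrable (fun ω => ∑ i, (2 * k * c i) * u i ω) m := by
    apply integrable_finset_sum; intro i _
    exact (hint i).const_mul _
  calc ∫ ω, ((∑ i, c i * u i ω) + k) ^ 2 ∂m
      = ∫ ω, ((∑ i, ∑ j, c i * c j * (u i ω * u j ω))
          + ((∑ i, (2 * k * c i) * u i ω) + k ^ 2)) ∂m := by
        exact integral_congr_ae (Filter.EventuallyEq.of_eq (funext hpt))
    _ = (∑ i, ∑ j, c i * c j * ∫ ω, u i ω * u j ω ∂m)
          + ((∑ i, (2 * k * c i) * ∫ ω, u i ω ∂m) + k ^ 2) := by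
        rw [integral_add hI1 hI2, integral_add hI3 (integrable_const _)]
        congr 1
        · rw [integral_finset_sum _ (fun i _ => by
            exact integrable_finset_sum _ (fun j _ => (hmul i j).const_mul _))]
          apply Finset.sum_congr rfl; intro i _
          rw [integral_finset_sum _ (fun j _ => (hmul i j).const_mul _)]
          apply Finset.sum_congr rfl; intro j _
          exact integral_const_mul _ _
        · congr 1
          · rw [integral_finset_sum _ (fun i _ => (hint i).const_mul _)]
            apply Finset.sum_congr rfl; intro i _
            exact integral_const_mul _ _
          · simp
    _ = _ := by
        have e3 : 2 * k * (∑ i, c i * ∫ ω, u i ω ∂m) = ∑ i, (2 * k * c i) * ∫ ω, u i ω ∂m := by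
          rw [Finset.mul_sum]
          exact Finset.sum_congr rfl fun i _ => by ring
        rw [e3]; ring

/-- Eq. (13) of the paper, the matched-model case `p = l` of the Bayesian polynomial
regression MSE: when the model order matches the ground truth, the prior matches the
ground-truth coefficient distribution and the design matrices coincide, the MSE
(Bias + Variance) equals `2 φᵀΣ_pφ = 2(σ_p²(x) - σ²)`. -/
theorem bpr_mse_matched_model {n p : ℕ} (σ : ℝ) (hσ : 0 < σ)
    {Ω : Type*} [MeasurableSpace Ω] (m : Measure Ω) [IsProbabilityMeasure m]
    (φ μv : Fin (p + 1) → ℝ)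
    (S : Matrix (Fin (p + 1)) (Fin (p + 1)) ℝ) (hSsymm : S.IsSymm) (hSpd : S.PosDef)
    (Φ : Matrix (Fin n) (Fin (p + 1)) ℝ)
    (Sp : Matrix (Fin (p + 1)) (Fin (p + 1)) ℝ)
    (hSp : Sp = (S⁻¹ + σ⁻¹ ^ 2 • (Φᵀ * Φ))⁻¹)
    (w : Ω → Fin (p + 1) → ℝ) (e : Ω → Fin n → ℝ)
    (hwL2 : ∀ i, MemLp (fun ω => w ω i) 2 m)
    (heL2 : ∀ i, MemLp (fun ω => e ω i) 2 m)
    (hw1 : ∀ i, ∫ ω, w ω i ∂m = μv i)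
    (hw2 : ∀ i j, ∫ ω, w ω i * w ω j ∂m = μv i * μv j + S i j)
    (he1 : ∀ i, ∫ ω, e ω i ∂m = 0)
    (he2 : ∀ i j, ∫ ω, e ω i * e ω j ∂m = σ ^ 2 * (1 : Matrix (Fin n) (Fin n) ℝ) i j)
    (hwe : ∀ i j, ∫ ω, w ω i * e ω j ∂m = 0)
    (μp : Ω → Fin (p + 1) → ℝ)
    (hμp : ∀ ω, μp ω = Sp *ᵥ (S⁻¹ *ᵥ μv) + σ⁻¹ ^ 2 • (Sp *ᵥ (Φᵀ *ᵥ (Φ *ᵥ w ω + e ω)))) :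
    (∫ ω, (φ ⬝ᵥ w ω - φ ⬝ᵥ μp ω) ^ 2 ∂m) + φ ⬝ᵥ (Sp *ᵥ φ) = 2 * (φ ⬝ᵥ (Sp *ᵥ φ)) ∧
      (∫ ω, (φ ⬝ᵥ w ω - φ ⬝ᵥ μp ω) ^ 2 ∂m) + φ ⬝ᵥ (Sp *ᵥ φ) =
        2 * ((σ ^ 2 + φ ⬝ᵥ (Sp *ᵥ φ)) - σ ^ 2) := by
  have hσ0 : σ ≠ 0 := hσ.ne'
  set B : Matrix (Fin (p + 1)) (Fin (p + 1)) ℝ := S⁻¹ + σ⁻¹ ^ 2 • (Φᵀ * Φ) with hB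
  -- positive definiteness of B
  have hPSD : (σ⁻¹ ^ 2 • (Φᵀ * Φ)).PosSemidef := by
    have h := posSemidef_conjTranspose_mul_self (σ⁻¹ • Φ)
    have : (σ⁻¹ • Φ)ᴴ * (σ⁻¹ • Φ) = σ⁻¹ ^ 2 • (Φᵀ * Φ) := by
      rw [conjTranspose_smul]
      simp [Matrix.smul_mul, Matrix.mul_smul, smul_smul, sq]
    rwa [this] at h
  have hBpd : B.PosDef := hSpd.inv.add_posSemidef hPSD
  have hBdet : IsUnit B.det := hBpd.det_pos.ne'.isUnit
  have hSpB : Sp * B = 1 := by rw [hSp]; exact nonsing_inv_mul B hBdet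
  have hBSp : B * Sp = 1 := by rw [hSp]; exact mul_nonsing_inv B hBdet
  have hSinvT : S⁻¹ᵀ = S⁻¹ := by rw [transpose_nonsing_inv, hSsymm.eq]
  have hBT : Bᵀ = B := by
    rw [hB, transpose_add, transpose_smul, transpose_mul, transpose_transpose, hSinvT]
  have hSpT : Spᵀ = Sp := by rw [hSp, transpose_nonsing_inv, hBT]
  have hSdet : IsUnit S.det := hSpd.det_pos.ne'.isUnit
  have hSinvS : S⁻¹ * S = 1 := nonsing_inv_mul S hSdet
  -- key matrices
  set M : Matrix (Fin (p + 1)) (Fin (p + 1)) ℝ := Sp * S⁻¹ with hM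
  set N : Matrix (Fin (p + 1)) (Fin n) ℝ := σ⁻¹ ^ 2 • (Sp * Φᵀ) with hN
  have hMeq : (1 : Matrix (Fin (p+1)) (Fin (p+1)) ℝ) - σ⁻¹ ^ 2 • (Sp * (Φᵀ * Φ)) = M := by
    have : Sp * B = Sp * S⁻¹ + σ⁻¹ ^ 2 • (Sp * (Φᵀ * Φ)) := by
      rw [hB, Matrix.mul_add, Matrix.mul_smul]
    rw [hM, ← hSpB, this]; abel
  set a : Fin (p + 1) → ℝ := Mᵀ *ᵥ φ with ha
  set b : Fin n → ℝ := Nᵀ *ᵥ φ with hb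
  set k : ℝ := -(a ⬝ᵥ μv) with hk
  -- pointwise decomposition
  have hpt : ∀ ω, φ ⬝ᵥ w ω - φ ⬝ᵥ μp ω = (a ⬝ᵥ w ω + (-b) ⬝ᵥ e ω) + k := by
    intro ω
    have h1 : a ⬝ᵥ w ω = φ ⬝ᵥ w ω - σ⁻¹ ^ 2 * (φ ⬝ᵥ ((Sp * (Φᵀ * Φ)) *ᵥ w ω)) := by
      rw [ha, dot_trans, ← hMeq]
      simp only [sub_mulVec, one_mulVec, smul_mulVec, dotProduct_sub,
        dotProduct_smul, smul_eq_mul]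
    have h2 : b ⬝ᵥ e ω = σ⁻¹ ^ 2 * (φ ⬝ᵥ ((Sp * Φᵀ) *ᵥ e ω)) := by
      rw [hb, dot_trans, hN]
      simp only [smul_mulVec, dotProduct_smul, smul_eq_mul]
    have h3 : a ⬝ᵥ μv = φ ⬝ᵥ (Sp *ᵥ (S⁻¹ *ᵥ μv)) := by
      rw [ha, dot_trans, hM, ← mulVec_mulVec]
    rw [hμp, hk, neg_dotProduct, h1, h2, h3]
    simp only [mulVec_add, mulVec_mulVec, dotProduct_add, dotProduct_smul,
      smul_mulVec, smul_eq_mul, Matrix.mul_assoc]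
    ring
  -- apply the integral lemma
  set u : (Fin (p + 1) ⊕ Fin n) → Ω → ℝ := Sum.elim (fun i ω => w ω i) (fun j ω => e ω j) with hu
  set c : (Fin (p + 1) ⊕ Fin n) → ℝ := Sum.elim a (fun j => -(b j)) with hc
  have huL2 : ∀ i, MemLp (u i) 2 m := by rintro (i | j); exacts [hwL2 i, heL2 j]
  have hsum : ∀ ω, φ ⬝ᵥ w ω - φ ⬝ᵥ μp ω = (∑ i, c i * u i ω) + k := by
    intro ω
    rw [hpt ω]
    congr 1
    rw [Fintype.sum_sum_type]
    simp [hc, hu, dotProduct, neg_dotProduct]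
  have hI := integral_affine_sq m u huL2 c k
  have hIeq : ∫ ω, (φ ⬝ᵥ w ω - φ ⬝ᵥ μp ω) ^ 2 ∂m
      = (∑ i, ∑ j, c i * c j * ∫ ω, u i ω * u j ω ∂m)
        + 2 * k * (∑ i, c i * ∫ ω, u i ω ∂m) + k ^ 2 := by
    rw [← hI]
    exact integral_congr_ae (Filter.EventuallyEq.of_eq (funext fun ω => by rw [hsum ω]))
  -- evaluate the sums
  have hlin : (∑ i, c i * ∫ ω, u i ω ∂m) = a ⬝ᵥ μv := by
    rw [Fintype.sum_sum_type]
    simp [hc, hu, hw1, he1, dotProduct]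
  have hquad : (∑ i, ∑ j, c i * c j * ∫ ω, u i ω * u j ω ∂m)
      = (a ⬝ᵥ μv) ^ 2 + a ⬝ᵥ (S *ᵥ a) + σ ^ 2 * (b ⬝ᵥ b) := by
    rw [Fintype.sum_sum_type]
    have hww : ∀ i : Fin (p+1), (∑ j : Fin (p+1) ⊕ Fin n,
        c (Sum.inl i) * c j * ∫ ω, u (Sum.inl i) ω * u j ω ∂m)
        = a i * (a ⬝ᵥ μv) * μv i + a i * (S *ᵥ a) i := by
      intro i
      rw [Fintype.sum_sum_type]
      simp only [hc, hu, Sum.elim_inl, Sum.elim_inr, hw2, hwe]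
      simp only [mul_zero, Finset.sum_const_zero, add_zero]
      rw [dotProduct, mulVec]
      simp only [Finset.mul_sum, Finset.sum_mul, dotProduct]
      rw [← Finset.sum_add_distrib]
      apply Finset.sum_congr rfl; intro j _
      simp [mul_add]; ring
    have hee : ∀ i : Fin n, (∑ j : Fin (p+1) ⊕ Fin n,
        c (Sum.inr i) * c j * ∫ ω, u (Sum.inr i) ω * u j ω ∂m)
        = σ ^ 2 * (b i * b i) := by
      intro i
      rw [Fintype.sum_sum_type]
      have hew : ∀ (i' : Fin (p+1)) (j : Fin n), ∫ ω, e ω j * w ω i' ∂m = 0 := by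
        intro i' j
        rw [← hwe i' j]
        exact integral_congr_ae (Filter.EventuallyEq.of_eq (funext fun ω => mul_comm _ _))
      simp only [hc, hu, Sum.elim_inl, Sum.elim_inr, he2, hew]
      simp only [mul_zero, Finset.sum_const_zero, zero_add]
      rw [Finset.sum_eq_single i]
      · simp [Matrix.one_apply]; ring
      · intro j _ hji
        simp [Matrix.one_apply, (Ne.symm hji)]
      · intro h; exact absurd (Finset.mem_univ i) h
    rw [Finset.sum_congr rfl (fun i _ => hww i), Finset.sum_congr rfl (fun i _ => hee i)]
    have e1 : (a ⬝ᵥ μv) ^ 2 = ∑ i, a i * (a ⬝ᵥ μv) * μv i := by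
      rw [sq]
      nth_rewrite 1 [dotProduct]
      rw [Finset.sum_mul]
      exact Finset.sum_congr rfl fun i _ => by ring
    have e2 : a ⬝ᵥ (S *ᵥ a) = ∑ i, a i * (S *ᵥ a) i := rfl
    have e3 : σ ^ 2 * (b ⬝ᵥ b) = ∑ i, σ ^ 2 * (b i * b i) := by
      rw [dotProduct, Finset.mul_sum]
    rw [e1, e2, e3, ← Finset.sum_add_distrib]
  -- matrix identity
  have hMT : Mᵀ = S⁻¹ * Sp := by rw [hM, transpose_mul, hSinvT, hSpT]
  have h5 : M * S * Mᵀ = Sp * (S⁻¹ * Sp) := by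
    rw [hM, hMT]
    calc Sp * S⁻¹ * S * (S⁻¹ * Sp) = Sp * (S⁻¹ * S) * (S⁻¹ * Sp) := by
          rw [Matrix.mul_assoc Sp]
      _ = Sp * (S⁻¹ * Sp) := by rw [hSinvS, Matrix.mul_one]
  have h6 : σ ^ 2 • (N * Nᵀ) = Sp * (σ⁻¹ ^ 2 • (Φᵀ * Φ) * Sp) := by
    rw [hN, transpose_smul, transpose_mul, transpose_transpose, hSpT]
    rw [Matrix.smul_mul, Matrix.mul_smul, smul_smul, smul_smul]
    have hc2 : σ ^ 2 * σ⁻¹ ^ 2 * σ⁻¹ ^ 2 = σ⁻¹ ^ 2 := by field_simp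
    rw [hc2, Matrix.smul_mul, Matrix.mul_smul]
    congr 1
    rw [Matrix.mul_assoc, Matrix.mul_assoc]
  have key : M * S * Mᵀ + σ ^ 2 • (N * Nᵀ) = Sp := by
    rw [h5, h6, ← Matrix.mul_add, ← Matrix.add_mul, ← hB, hBSp, Matrix.mul_one]
  have ea : a ⬝ᵥ (S *ᵥ a) = φ ⬝ᵥ ((M * S * Mᵀ) *ᵥ φ) := by
    rw [ha, mulVec_mulVec, dot_trans, mulVec_mulVec, ← Matrix.mul_assoc]
  have eb : b ⬝ᵥ b = φ ⬝ᵥ ((N * Nᵀ) *ᵥ φ) := by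
    rw [hb, dot_trans, mulVec_mulVec]
  have hbb : a ⬝ᵥ (S *ᵥ a) + σ ^ 2 * (b ⬝ᵥ b) = φ ⬝ᵥ (Sp *ᵥ φ) := by
    rw [ea, eb, ← key, add_mulVec, dotProduct_add, smul_mulVec, dotProduct_smul,
      smul_eq_mul]
  have hfinal : ∫ ω, (φ ⬝ᵥ w ω - φ ⬝ᵥ μp ω) ^ 2 ∂m = φ ⬝ᵥ (Sp *ᵥ φ) := by
    rw [hIeq, hquad, hlin, hk, ← hbb]; ring
  exact ⟨by rw [hfinal]; ring, by rw [hfinal]; ring⟩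
end
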